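/- arXiv:1509.05125 — 4 statements merged into one kernel-verified Lean document; each statement's English description precedes it below -/
import Mathlib

section
/- Suppose g is convex differentiable with ∇g satisfying (∇g(x) − ∇g(y))ᵀ(x − y) ≤ (x − y)ᵀL(x − y) for a symmetric positive definite L, and suppose the scaling matrices S(x) satisfy 2(1−σ) S(x)⁻¹ ⪰ L for all x ∈ X, with σ ∈ (0,1). Let y* = y*(x, α=1) be the gradient-projection point with unit step size. Then the Armijo condition g(x) − g(y*) ≥ σ (y* − x)ᵀ S(x)⁻¹ (y* − x) holds, i.e., the line-search rule always selects step size 1. -/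
open scoped RealInnerProductSpace

/-- The quadratic form `v ↦ vᵀ M v` on Euclidean space. -/
noncomputable def quadForm {n : ℕ} (M : Matrix (Fin n) (Fin n) ℝ)
    (v : EuclideanSpace ℝ (Fin n)) : ℝ :=
  ⟪v, Matrix.toEuclideanLin M v⟫

lemma quadForm_eq {n : ℕ} (M : Matrix (Fin n) (Fin n) ℝ) (v : EuclideanSpace ℝ (Fin n)) :
    quadForm M v = dotProduct (star (v : Fin n → ℝ)) (M.mulVec v) := by
  simp [quadForm, Matrix.toEuclideanLin_apply, PiLp.inner_apply, dotProduct, mul_comm]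

lemma quadForm_nonneg {n : ℕ} {M : Matrix (Fin n) (Fin n) ℝ} (hM : M.PosSemidef)
    (v : EuclideanSpace ℝ (Fin n)) : 0 ≤ quadForm M v := by
  rw [quadForm_eq]; exact hM.dotProduct_mulVec_nonneg v

lemma quadForm_smul_vec {n : ℕ} (M : Matrix (Fin n) (Fin n) ℝ) (t : ℝ)
    (v : EuclideanSpace ℝ (Fin n)) : quadForm M (t • v) = t^2 * quadForm M v := by
  simp [quadForm, map_smul, inner_smul_left, inner_smul_right]; ring

lemma quadForm_sub {n : ℕ} (A B : Matrix (Fin n) (Fin n) ℝ) (v : EuclideanSpace ℝ (Fin n)) :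
    quadForm (A - B) v = quadForm A v - quadForm B v := by
  simp [quadForm, map_sub, inner_sub_right]

lemma quadForm_smul_mat {n : ℕ} (c : ℝ) (A : Matrix (Fin n) (Fin n) ℝ)
    (v : EuclideanSpace ℝ (Fin n)) : quadForm (c • A) v = c * quadForm A v := by
  simp [quadForm, map_smul, inner_smul_right]

theorem stmt3 {n : ℕ} (X : Set (EuclideanSpace ℝ (Fin n)))
    (hXne : X.Nonempty) (hXcl : IsClosed X) (hXcv : Convex ℝ X)
    (g : EuclideanSpace ℝ (Fin n) → ℝ)
    (g' : EuclideanSpace ℝ (Fin n) → EuclideanSpace ℝ (Fin n))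
    (hg : ∀ x, HasGradientAt g (g' x) x)
    (hgcv : ConvexOn ℝ Set.univ g)
    (L : Matrix (Fin n) (Fin n) ℝ) (hL : L.PosDef)
    (hlip : ∀ x y, ⟪g' x - g' y, x - y⟫ ≤ quadForm L (x - y))
    (S : EuclideanSpace ℝ (Fin n) → Matrix (Fin n) (Fin n) ℝ)
    (hSpd : ∀ x ∈ X, (S x).PosDef)
    (σ : ℝ) (hσ : σ ∈ Set.Ioo (0 : ℝ) 1)
    (hscale : ∀ x ∈ X, ((2 * (1 - σ)) • (S x)⁻¹ - L).PosSemidef)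
    (x : EuclideanSpace ℝ (Fin n)) (hx : x ∈ X)
    (ystar : EuclideanSpace ℝ (Fin n)) (hy : ystar ∈ X)
    (hymin : IsMinOn (fun y =>
      ⟪g' x, y - x⟫ + (1 / 2) * quadForm (S x)⁻¹ (y - x)) X ystar) :
    g x - g ystar ≥ σ * quadForm (S x)⁻¹ (ystar - x) := by
  set d : EuclideanSpace ℝ (Fin n) := ystar - x with hd
  set Q : Matrix (Fin n) (Fin n) ℝ := (S x)⁻¹ with hQ
  set a : ℝ := ⟪g' x, d⟫ with ha
  set b : ℝ := quadForm Q d with hb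
  set c : ℝ := quadForm L d with hc
  have hQpsd : Q.PosSemidef := ((hSpd x hx).inv).posSemidef
  have hbnn : 0 ≤ b := quadForm_nonneg hQpsd d
  have hcb : c ≤ 2 * (1 - σ) * b := by
    have h0 := quadForm_nonneg (hscale x hx) d
    rw [quadForm_sub, quadForm_smul_mat] at h0
    linarith
  -- variational inequality: a + b ≤ 0
  have hkey : ∀ t : ℝ, 0 < t → t ≤ 1 → a + b ≤ t / 2 * b := by
    intro t ht0 ht1
    have hz : (1 - t) • ystar + t • x ∈ X :=
      hXcv hy hx (by linarith) ht0.le (by ring)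
    have hmin := hymin hz
    have hzx : ((1 - t) • ystar + t • x) - x = (1 - t) • d := by
      rw [hd]; module
    simp only [Set.mem_setOf_eq, hzx] at hmin
    rw [real_inner_smul_right, quadForm_smul_vec] at hmin
    have hyx : ystar - x = d := rfl
    rw [hyx] at hmin
    have : a + 1 / 2 * b ≤ (1 - t) * a + 1 / 2 * ((1 - t) ^ 2 * b) := hmin
    nlinarith
  have hab : a + b ≤ 0 := by
    by_contra h
    push_neg at h
    rcases eq_or_lt_of_le hbnn with hb0 | hb0
    · have := hkey 1 one_pos le_rfl
      linarith
    · have ht0 : 0 < min 1 ((a + b) / b) := lt_min one_pos (div_pos h hb0)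
      have := hkey _ ht0 (min_le_left _ _)
      have hm : (min 1 ((a + b) / b)) ≤ (a + b) / b := min_le_right _ _
      have h3 : (a + b) / b * b = a + b := div_mul_cancel₀ _ hb0.ne'
      nlinarith [mul_le_mul_of_nonneg_right hm (by positivity : (0:ℝ) ≤ b / 2)]
  -- descent lemma
  have hcurve : ∀ t : ℝ, HasDerivAt (fun s : ℝ => x + s • d) d t := by
    intro t
    have h1 : HasDerivAt (fun s : ℝ => s • d) d t := by
      simpa using (hasDerivAt_id t).smul_const d
    simpa using h1.const_add x
  have hder : ∀ t : ℝ, HasDerivAt (fun s : ℝ => g (x + s • d) - s * a - s ^ 2 / 2 * c)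
      (⟪g' (x + t • d), d⟫ - a - t * c) t := by
    intro t
    have h1 : HasDerivAt (fun s : ℝ => g (x + s • d))
        ((InnerProductSpace.toDual ℝ _ (g' (x + t • d))) d) t :=
      (hg (x + t • d)).hasFDerivAt.comp_hasDerivAt t (hcurve t)
    rw [InnerProductSpace.toDual_apply_apply] at h1
    have h2 : HasDerivAt (fun s : ℝ => s * a) a t := by
      simpa using (hasDerivAt_id t).mul_const a
    have h3 : HasDerivAt (fun s : ℝ => s ^ 2 / 2 * c) (t * c) t := by
      have := ((hasDerivAt_pow 2 t).div_const 2).mul_const c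
      simpa using this.congr_deriv (by push_cast; ring)
    exact (h1.sub h2).sub h3
  have hanti : AntitoneOn (fun s : ℝ => g (x + s • d) - s * a - s ^ 2 / 2 * c)
      (Set.Icc 0 1) := by
    apply antitoneOn_of_deriv_nonpos (convex_Icc 0 1)
    · exact fun t _ => ((hder t).differentiableAt).continuousAt.continuousWithinAt
    · intro t ht
      exact ((hder t).differentiableAt).differentiableWithinAt
    · intro t ht
      rw [interior_Icc] at ht
      rw [(hder t).deriv]
      have hlt := hlip (x + t • d) x
      have hxx : (x + t • d) - x = t • d := by module
      rw [hxx, real_inner_smul_right, quadForm_smul_vec] at hlt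
      rw [inner_sub_left] at hlt
      have ha' : ⟪g' x, d⟫ = a := rfl
      rw [ha'] at hlt
      nlinarith [ht.1, ht.2]
  have hfin := hanti (Set.left_mem_Icc.mpr zero_le_one)
    (Set.right_mem_Icc.mpr zero_le_one) zero_le_one
  have hx1 : x + (1 : ℝ) • d = ystar := by rw [hd]; module
  simp only [hx1, one_mul, one_pow, zero_smul, add_zero, zero_mul, sub_zero,
    ne_eq, OfNat.ofNat_ne_zero, not_false_eq_true, zero_pow, zero_div] at hfin
  have hgoal : g ystar - a - 1 ^ 2 / 2 * c ≤ g x := by linarith [hfin]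
  nlinarith [hσ.1, hσ.2]
end

section
/- Let λ* be a solution of min_Λ g with strict complementarity, E = E(λ*) a matrix whose columns form an orthonormal basis of the reduced space Z = {d ∈ ℝᵐ : aⱼᵀd = 0, j ∈ A(λ*)}. Suppose λ, μ ∈ Λ satisfy μ = gradient-projection of λ with step α and scaling S(λ), and λ = λ* + E x̃, μ = λ* + E ỹ for some x̃, ỹ. Then ỹ = x̃ − α S̃(λ) ∇̃g(λ), where ∇̃g = Eᵀ∇g and S̃(λ) = (Eᵀ S(λ)⁻¹ E)⁻¹; i.e., in the reduced space the projected step is an unconstrained scaled gradient descent. -/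
open scoped RealInnerProductSpace
open Matrix

/-! Since `μ` has the same active constraints as `λ*` and every `E z` is orthogonal to their
normals, `μ + t • E z` stays in `Λ` for all small `|t|`. So along the range of `E` the quadratic
model is minimized at an interior point, and its gradient `∇g(λ) + α⁻¹ S(λ)⁻¹ (μ - λ)` is
orthogonal to that range. Writing `μ - λ = E (ỹ - x̃)` and applying `Eᵀ` turns this into the linear equation
`Eᵀ ∇g(λ) + α⁻¹ (Eᵀ S(λ)⁻¹ E)(ỹ - x̃) = 0`, whose matrix is positive definite because `E` is
injective. -/

open Filter Topology

section FirstOrder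

variable {F : Type*} [NormedAddCommGroup F] [InnerProductSpace ℝ F]

theorem IsMinOn.hasDerivAt_line_eq_zero {f : F → ℝ} {s : Set F} {x d : F} {L : ℝ}
    (hmin : IsMinOn f s x) (hf : HasDerivAt (fun t : ℝ => f (x + t • d)) L 0)
    (hline : ∀ᶠ t : ℝ in 𝓝 0, x + t • d ∈ s) : L = 0 := by
  refine IsLocalMin.hasDerivAt_eq_zero ?_ hf
  filter_upwards [hline] with t ht
  simpa using hmin ht

theorem hasDerivAt_inner_add_mul_inner_line {T : F →ₗ[ℝ] F} (hT : T.IsSymmetric)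
    (v x y d : F) (c : ℝ) :
    HasDerivAt (fun t : ℝ => ⟪v, y + t • d - x⟫ + c * ⟪y + t • d - x, T (y + t • d - x)⟫)
      ⟪v + (2 * c) • T (y - x), d⟫ 0 := by
  have hw : HasDerivAt (fun t : ℝ => y + t • d - x) d 0 := by
    simpa using (((hasDerivAt_id (0 : ℝ)).smul_const d).const_add y).sub_const x
  have hTw : HasDerivAt (fun t : ℝ => T (y + t • d - x)) (T d) 0 := by
    have h := ((hasDerivAt_id (0 : ℝ)).smul_const (T d)).const_add (T (y - x))
    simp only [id, one_smul] at h
    convert h using 2 with t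
    rw [add_sub_right_comm, map_add, map_smul]
  refine (((hasDerivAt_const (0 : ℝ) v).inner ℝ hw).add
    ((hw.inner ℝ hTw).const_mul c)).congr_deriv ?_
  simp only [zero_smul, add_zero, inner_zero_left, inner_add_left, real_inner_smul_left,
    real_inner_comm (T (y - x)) d, hT (y - x) d]
  ring

theorem eventually_forall_inner_add_smul_le {ι : Type*} [Finite ι] {a : ι → F} {b : ι → ℝ}
    {y d : F} (hy : ∀ j, ⟪a j, y⟫ ≤ b j) (hd : ∀ j, ⟪a j, y⟫ = b j → ⟪a j, d⟫ = 0) :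
    ∀ᶠ t : ℝ in 𝓝 0, ∀ j, ⟪a j, y + t • d⟫ ≤ b j := by
  rw [eventually_all]
  intro j
  simp only [inner_add_right, inner_smul_right]
  rcases (hy j).eq_or_lt with hact | hinact
  · exact .of_forall fun t => by simp [hact, hd j hact]
  · have hcont : Continuous fun t : ℝ => ⟪a j, y⟫ + t * ⟪a j, d⟫ := by fun_prop
    filter_upwards [hcont.continuousAt.eventually_lt continuousAt_const (by simpa using hinact)]
      with t ht using ht.le

end FirstOrder

namespace Matrix

variable {m n : Type*} [Fintype m] [DecidableEq m] [Fintype n] [DecidableEq n]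

theorem inner_toEuclideanLin_right (E : Matrix m n ℝ) (x : EuclideanSpace ℝ m)
    (z : EuclideanSpace ℝ n) : ⟪x, toEuclideanLin E z⟫ = ⟪toEuclideanLin Eᵀ x, z⟫ := by
  rw [← conjTranspose_eq_transpose_of_trivial, toEuclideanLin_conjTranspose_eq_adjoint,
    LinearMap.adjoint_inner_left]

theorem eq_sub_smul_of_forall_inner_toEuclideanLin_eq_zero {E : Matrix m n ℝ}
    {P : Matrix m m ℝ} (hM : IsUnit (Eᵀ * P * E).det) {α : ℝ} (hα : α ≠ 0)
    {v : EuclideanSpace ℝ m} {x y : EuclideanSpace ℝ n}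
    (h : ∀ z, ⟪v + α⁻¹ • toEuclideanLin P (toEuclideanLin E (y - x)), toEuclideanLin E z⟫ = 0) :
    y = x - α • toEuclideanLin (Eᵀ * P * E)⁻¹ (toEuclideanLin Eᵀ v) := by
  set M := Eᵀ * P * E
  have hres : toEuclideanLin Eᵀ v + α⁻¹ • toEuclideanLin M (y - x) = 0 := by
    have h0 := h (toEuclideanLin Eᵀ (v + α⁻¹ • toEuclideanLin P (toEuclideanLin E (y - x))))
    rw [inner_toEuclideanLin_right, inner_self_eq_zero] at h0
    simpa [M] using h0
  have hinv : toEuclideanLin M⁻¹ (toEuclideanLin M (y - x)) = y - x := by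
    rw [← LinearMap.comp_apply, ← toLpLin_mul_same, nonsing_inv_mul M hM, toLpLin_one,
      LinearMap.id_apply]
  have hMyx : toEuclideanLin M (y - x) = α • -toEuclideanLin Eᵀ v :=
    (inv_smul_eq_iff₀ hα).mp (eq_neg_of_add_eq_zero_right hres)
  rw [hMyx, map_smul, map_neg, smul_neg] at hinv
  rw [sub_eq_add_neg, hinv]
  abel

end Matrix

theorem stmt7_general {m mt p : ℕ}
    (a : Fin p → EuclideanSpace ℝ (Fin m)) (b : Fin p → ℝ)
    (Λ : Set (EuclideanSpace ℝ (Fin m)))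
    (hΛ : Λ = {lam | ∀ j, ⟪a j, lam⟫ ≤ b j})
    (g' : EuclideanSpace ℝ (Fin m) → EuclideanSpace ℝ (Fin m))
    (lstar : EuclideanSpace ℝ (Fin m))
    (A : Finset (Fin p)) (hA : A = Finset.univ.filter fun j => ⟪a j, lstar⟫ = b j)
    -- `E` has orthonormal columns spanning the reduced space at `lstar`
    (E : Matrix (Fin m) (Fin mt) ℝ) (hE : Eᵀ * E = 1)
    (hErange : Set.range (fun v : EuclideanSpace ℝ (Fin mt) => Matrix.toEuclideanLin E v) =
      {d : EuclideanSpace ℝ (Fin m) | ∀ j ∈ A, ⟪a j, d⟫ = 0})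
    -- one gradient-projection step from `lam` to `μ` with scaling `S lam`, step `α`
    (S : EuclideanSpace ℝ (Fin m) → Matrix (Fin m) (Fin m) ℝ)
    (α : ℝ) (hα : 0 < α)
    (lam μ : EuclideanSpace ℝ (Fin m)) (hμ : μ ∈ Λ)
    (hSpd : (S lam).PosDef)
    (hμmin : IsMinOn (fun y => ⟪g' lam, y - lam⟫ +
      (1 / (2 * α)) * ⟪y - lam, Matrix.toEuclideanLin (S lam)⁻¹ (y - lam)⟫) Λ μ)
    -- both `lam` and `μ` have the same active set as `lstar`
    (hactμ : {j | ⟪a j, μ⟫ = b j} = {j | ⟪a j, lstar⟫ = b j})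
    (xt yt : EuclideanSpace ℝ (Fin mt))
    (hlamx : lam = lstar + Matrix.toEuclideanLin E xt)
    (hμy : μ = lstar + Matrix.toEuclideanLin E yt) :
    yt = xt - α • Matrix.toEuclideanLin (Eᵀ * (S lam)⁻¹ * E)⁻¹
      (Matrix.toEuclideanLin Eᵀ (g' lam)) := by
  have hPinv : ((S lam)⁻¹).PosDef := hSpd.inv
  have hEinj : Function.Injective E.mulVec := fun u w h => by
    simpa [mulVec_mulVec, hE] using congrArg (Eᵀ *ᵥ ·) h
  have hM : IsUnit (Eᵀ * (S lam)⁻¹ * E).det := by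
    simpa using (hPinv.conjTranspose_mul_mul_same hEinj).det_pos.ne'.isUnit
  have hstep : μ - lam = toEuclideanLin E (yt - xt) := by
    rw [hμy, hlamx, map_sub]
    abel
  have hcoef : 2 * (1 / (2 * α)) = α⁻¹ := by field_simp
  refine eq_sub_smul_of_forall_inner_toEuclideanLin_eq_zero hM hα.ne' fun z => ?_
  rw [← hstep, ← hcoef]
  refine hμmin.hasDerivAt_line_eq_zero (hasDerivAt_inner_add_mul_inner_line
    (isSymmetric_toEuclideanLin_iff.mpr hPinv.isHermitian) _ _ _ _ _) ?_
  rw [hΛ] at hμ ⊢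
  refine eventually_forall_inner_add_smul_le hμ fun j hj => ?_
  have hjA : j ∈ A := by
    have : j ∈ {j | ⟪a j, lstar⟫ = b j} := hactμ ▸ hj
    simpa [hA] using this
  have hz : toEuclideanLin E z ∈ {d | ∀ j ∈ A, ⟪a j, d⟫ = 0} := hErange ▸ ⟨z, rfl⟩
  exact hz j hjA

theorem stmt7 {m mt p : ℕ}
    (a : Fin p → EuclideanSpace ℝ (Fin m)) (b : Fin p → ℝ)
    (Λ : Set (EuclideanSpace ℝ (Fin m)))
    (hΛ : Λ = {lam | ∀ j, ⟪a j, lam⟫ ≤ b j}) (hΛne : Λ.Nonempty)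
    (g : EuclideanSpace ℝ (Fin m) → ℝ)
    (g' : EuclideanSpace ℝ (Fin m) → EuclideanSpace ℝ (Fin m))
    (hg : ∀ x, HasGradientAt g (g' x) x)
    (hgcv : StrictConvexOn ℝ Set.univ g)
    (K : NNReal) (hlip : LipschitzWith K g')
    (lstar : EuclideanSpace ℝ (Fin m)) (hmem : lstar ∈ Λ)
    (hminstar : IsMinOn g Λ lstar)
    (A : Finset (Fin p)) (hA : A = Finset.univ.filter fun j => ⟪a j, lstar⟫ = b j)
    -- strict complementarity at `lstar`
    (c : Fin p → ℝ) (hcpos : ∀ j ∈ A, 0 < c j)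
    (hkkt : g' lstar = -∑ j ∈ A, c j • a j)
    -- `E` has orthonormal columns spanning the reduced space at `lstar`
    (E : Matrix (Fin m) (Fin mt) ℝ) (hE : Eᵀ * E = 1)
    (hErange : Set.range (fun v : EuclideanSpace ℝ (Fin mt) => Matrix.toEuclideanLin E v) =
      {d : EuclideanSpace ℝ (Fin m) | ∀ j ∈ A, ⟪a j, d⟫ = 0})
    -- one gradient-projection step from `lam` to `μ` with scaling `S lam`, step `α`
    (S : EuclideanSpace ℝ (Fin m) → Matrix (Fin m) (Fin m) ℝ)
    (α : ℝ) (hα : 0 < α)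
    (lam μ : EuclideanSpace ℝ (Fin m)) (hlam : lam ∈ Λ) (hμ : μ ∈ Λ)
    (hSpd : (S lam).PosDef)
    (hμmin : IsMinOn (fun y => ⟪g' lam, y - lam⟫ +
      (1 / (2 * α)) * ⟪y - lam, Matrix.toEuclideanLin (S lam)⁻¹ (y - lam)⟫) Λ μ)
    -- both `lam` and `μ` have the same active set as `lstar`
    (hactlam : {j | ⟪a j, lam⟫ = b j} = {j | ⟪a j, lstar⟫ = b j})
    (hactμ : {j | ⟪a j, μ⟫ = b j} = {j | ⟪a j, lstar⟫ = b j})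
    (xt yt : EuclideanSpace ℝ (Fin mt))
    (hlamx : lam = lstar + Matrix.toEuclideanLin E xt)
    (hμy : μ = lstar + Matrix.toEuclideanLin E yt) :
    yt = xt - α • Matrix.toEuclideanLin (Eᵀ * (S lam)⁻¹ * E)⁻¹
      (Matrix.toEuclideanLin Eᵀ (g' lam)) :=
  stmt7_general a b Λ hΛ g' lstar A hA E hE hErange S α hα lam μ hμ hSpd hμmin hactμ xt yt hlamx hμy
end

section
/- Let H = D − L − Lᵀ be a symmetric n×n block matrix where D = diag(D₁,…,D_q) is block diagonal and L is strictly lower block triangular, and let T = diag(T₁,…,T_q) be symmetric positive definite block diagonal. Define Gᵢ = I − Pᵢ T H where Pᵢ = diag(0,…,0,I_i,0,…,0) selects the i-th block. Then G_q G_{q−1} ⋯ G₁ = (T⁻¹ − L)⁻¹ (T⁻¹ − D + Lᵀ). -/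
/-! Write `M_l` for the product of the `G_a`, `a ∈ l`, and `Q_l` for the projection onto the
blocks in `l`. Sweeping the blocks in increasing order keeps the invariant
`(1 - T Q_l L) M_l = 1 - T Q_l (D - Lᵀ)`: `G_a` only changes the rows of block `a`, the rows of
block `a` of `D - Lᵀ` only see blocks `≥ a`, which the earlier factors leave untouched, and `L`
maps nothing from block `a` into the blocks swept so far. Once every block is swept `Q = 1`, and
multiplying by `T⁻¹` gives `(T⁻¹ - L) M = T⁻¹ - D + Lᵀ`. Finally `T⁻¹ - L = T⁻¹ (1 - T L)` is
invertible because `T L` is strictly block lower triangular, so that `det (1 - T L) = 1`. -/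

open Matrix

namespace Matrix

variable {ι β R : Type*}

def IsBlockDiagonal [Zero R] (b : ι → β) (A : Matrix ι ι R) : Prop :=
  ∀ j k, b j ≠ b k → A j k = 0

def IsStrictBlockLower [Zero R] [LT β] (b : ι → β) (A : Matrix ι ι R) : Prop :=
  ∀ j k, ¬ b k < b j → A j k = 0

section blockProj

variable [DecidableEq ι]

def blockProj [Zero R] [One R] (b : ι → β) (p : β → Prop) [DecidablePred p] : Matrix ι ι R :=
  diagonal fun j => if p (b j) then 1 else 0

/-- The last block of `l` is swept first. -/
def blockSweep [Fintype ι] [Ring R] [DecidableEq β] (b : ι → β) (T H : Matrix ι ι R)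
    (l : List β) : Matrix ι ι R :=
  (l.map fun a => 1 - blockProj b (· = a) * T * H).prod

variable [Semiring R] {b : ι → β} {p p' : β → Prop} [DecidablePred p] [DecidablePred p']

lemma blockProj_eq_one (h : ∀ j, p (b j)) : blockProj b p = (1 : Matrix ι ι R) := by
  simp [blockProj, h]

lemma blockProj_or_of_disjoint (h : ∀ x, p x → ¬ p' x) :
    blockProj b (fun x => p x ∨ p' x) = (blockProj b p + blockProj b p' : Matrix ι ι R) := by
  ext j k
  by_cases hjk : j = k
  · subst hjk
    by_cases hp : p (b j) <;> simp [blockProj, hp, h]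
  · simp [blockProj, hjk]

lemma blockProj_cons [DecidableEq β] (a : β) {l : List β} (ha : a ∉ l) :
    blockProj b (· ∈ a :: l) = (blockProj b (· = a) + blockProj b (· ∈ l) : Matrix ι ι R) := by
  rw [← blockProj_or_of_disjoint fun x hx => hx ▸ ha]
  congr! 2
  exact List.mem_cons

variable [Fintype ι]

lemma blockProj_mul_apply (A : Matrix ι ι R) (j k : ι) :
    (blockProj b p * A : Matrix ι ι R) j k = if p (b j) then A j k else 0 := by
  simp [blockProj]

lemma mul_blockProj_apply (A : Matrix ι ι R) (j k : ι) :
    (A * blockProj b p : Matrix ι ι R) j k = if p (b k) then A j k else 0 := by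
  simp [blockProj]

lemma blockProj_mul_blockProj_of_disjoint (h : ∀ x, p x → ¬ p' x) :
    blockProj b p * blockProj b p' = (0 : Matrix ι ι R) := by
  ext j k
  rw [blockProj_mul_apply]
  split_ifs with hp
  · by_cases hjk : j = k
    · subst hjk
      simp [blockProj, h _ hp]
    · simp [blockProj, hjk]
  · rfl

lemma blockProj_mul_mul_blockProj_eq_zero {A : Matrix ι ι R}
    (h : ∀ j k, p (b j) → p' (b k) → A j k = 0) :
    blockProj b p * A * blockProj b p' = 0 := by
  ext j k
  rw [mul_blockProj_apply, blockProj_mul_apply]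
  split_ifs with hk hj
  exacts [h j k hj hk, rfl, rfl]

lemma mul_blockProj_eq_self {A : Matrix ι ι R} (h : ∀ j k, ¬ p (b k) → A j k = 0) :
    A * blockProj b p = A := by
  ext j k
  rw [mul_blockProj_apply]
  split_ifs with hk
  · rfl
  · exact (h j k hk).symm

lemma IsBlockDiagonal.blockProj_mul_comm {T : Matrix ι ι R} (hT : T.IsBlockDiagonal b) :
    blockProj b p * T = T * blockProj b p := by
  ext j k
  rw [mul_blockProj_apply, blockProj_mul_apply]
  by_cases hjk : b j = b k
  · rw [hjk]
  · simp [hT j k hjk]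

end blockProj

lemma IsBlockDiagonal.isStrictBlockLower_mul [Fintype ι] [NonUnitalNonAssocSemiring R] [LT β]
    {b : ι → β} {T L : Matrix ι ι R} (hT : T.IsBlockDiagonal b)
    (hL : L.IsStrictBlockLower b) : (T * L).IsStrictBlockLower b := by
  intro j k hjk
  rw [mul_apply]
  refine Finset.sum_eq_zero fun x _ => ?_
  by_cases hjx : b j = b x
  · rw [hL x k (hjx ▸ hjk), mul_zero]
  · rw [hT j x hjx, zero_mul]

lemma IsStrictBlockLower.det_one_sub [Fintype ι] [DecidableEq ι] [CommRing R] [LinearOrder β]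
    {b : ι → β} {N : Matrix ι ι R} (hN : N.IsStrictBlockLower b) : (1 - N).det = 1 := by
  have htri : (1 - N).BlockTriangular (OrderDual.toDual ∘ b) := fun j k hkj => by
    have hjk : b j < b k := hkj
    rw [sub_apply, one_apply_ne (fun h => hjk.ne (congrArg b h)), hN j k hjk.not_gt, sub_zero]
  rw [htri.det]
  refine Finset.prod_eq_one fun a _ => ?_
  suffices (1 - N).toSquareBlock (OrderDual.toDual ∘ b) a = 1 by rw [this, det_one]
  ext ⟨j, hj⟩ ⟨k, hk⟩
  have hjk : b k = b j := OrderDual.toDual.injective (hk.trans hj.symm)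
  simp [toSquareBlock_def, one_apply, hN j k hjk.not_lt]

section blockSweep

variable [Fintype ι] [DecidableEq ι] [Ring R] [DecidableEq β] {b : ι → β}

lemma blockProj_mul_blockSweep_of_forall_not (T H : Matrix ι ι R) {p : β → Prop}
    [DecidablePred p] {l : List β} (hl : ∀ c ∈ l, ¬ p c) :
    blockProj b p * blockSweep b T H l = blockProj b p := by
  induction l with
  | nil => simp [blockSweep]
  | cons a l ih =>
    have hdisj : blockProj b p * blockProj b (· = a) = (0 : Matrix ι ι R) :=
      blockProj_mul_blockProj_of_disjoint fun x hx hxa => hl a List.mem_cons_self (hxa ▸ hx)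
    rw [blockSweep, List.map_cons, List.prod_cons, ← mul_assoc, mul_sub, mul_one, ← mul_assoc,
      ← mul_assoc, hdisj, zero_mul, zero_mul, sub_zero]
    exact ih fun c hc => hl c (List.mem_cons_of_mem a hc)

theorem one_sub_mul_blockProj_mul_mul_blockSweep [Preorder β] {D L T : Matrix ι ι R}
    (hD : D.IsBlockDiagonal b) (hL : L.IsStrictBlockLower b) (hT : T.IsBlockDiagonal b)
    (l : List β) (hl : l.Pairwise (· > ·)) :
    (1 - T * blockProj b (· ∈ l) * L) * blockSweep b T (D - L - Lᵀ) l =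
      1 - T * blockProj b (· ∈ l) * (D - Lᵀ) := by
  induction l with
  | nil => simp [blockSweep, blockProj]
  | cons a l ih =>
    obtain ⟨hlt, hl⟩ := List.pairwise_cons.mp hl
    set P : Matrix ι ι R := blockProj b (· = a)
    set Q : Matrix ι ι R := blockProj b (· ∈ l)
    set M := blockSweep b T (D - L - Lᵀ) l
    have hPT : P * T = T * P := hT.blockProj_mul_comm
    have hQLP : (P + Q) * L * P = 0 := by
      rw [← blockProj_cons a fun h => (hlt a h).false]
      refine blockProj_mul_mul_blockProj_eq_zero fun j k hj hk => hL j k ?_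
      have hk : b k = a := hk
      rw [hk]
      rcases List.mem_cons.mp hj with hj | hj
      · rw [hj]
        exact lt_irrefl a
      · exact (hlt _ hj).not_gt
    have hPM : P * (D - Lᵀ) * M = P * (D - Lᵀ) := by
      have hcols : P * (D - Lᵀ) * blockProj b (· ∉ l) = P * (D - Lᵀ) := by
        refine mul_blockProj_eq_self fun j k hk => ?_
        have hk : b k < a := hlt _ (not_not.mp hk)
        rw [blockProj_mul_apply]
        split_ifs with hj
        · have hj : b j = a := hj
          rw [sub_apply, transpose_apply, hD j k (hj ▸ hk.ne'), hL k j (hj ▸ hk.not_gt),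
            sub_zero]
        · rfl
      rw [← hcols, mul_assoc _ (blockProj _ _),
        blockProj_mul_blockSweep_of_forall_not _ _ fun c hc hcl => hcl hc]
    rw [blockSweep, List.map_cons, List.prod_cons, blockProj_cons a fun h => (hlt a h).false]
    calc (1 - T * (P + Q) * L) * ((1 - P * T * (D - L - Lᵀ)) * M)
        = (1 - T * Q * L) * M - T * (P * (D - Lᵀ) * M)
            + T * ((P + Q) * L * (T * P)) * (D - L - Lᵀ) * M := by
          rw [hPT]
          noncomm_ring
      _ = 1 - T * (P + Q) * (D - Lᵀ) := by
          rw [ih hl, hPM, ← hPT, ← mul_assoc ((P + Q) * L), hQLP]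
          noncomm_ring

end blockSweep

end Matrix

theorem stmt8_general {n q : ℕ} (blk : Fin n → Fin q)
    (H D L T : Matrix (Fin n) (Fin n) ℝ)
    (hdecomp : H = D - L - Lᵀ)
    (hDblk : ∀ j k, blk j ≠ blk k → D j k = 0)
    (hLlow : ∀ j k, ¬ blk k < blk j → L j k = 0)
    (hT : T.PosDef)
    (hTblk : ∀ j k, blk j ≠ blk k → T j k = 0) :
    let P : Fin q → Matrix (Fin n) (Fin n) ℝ := fun i =>
      Matrix.diagonal fun j => if blk j = i then (1 : ℝ) else 0
    let G : Fin q → Matrix (Fin n) (Fin n) ℝ := fun i => 1 - P i * T * H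
    (List.ofFn G).reverse.prod = (T⁻¹ - L)⁻¹ * (T⁻¹ - D + Lᵀ) := by
  intro P G
  subst hdecomp
  have hTunit : IsUnit T.det := hT.det_pos.ne'.isUnit
  have hTT : T⁻¹ * T = 1 := nonsing_inv_mul T hTunit
  have hsweep := one_sub_mul_blockProj_mul_mul_blockSweep hDblk hLlow hTblk
    (List.finRange q).reverse (List.pairwise_reverse.mpr (List.pairwise_lt_finRange q))
  rw [blockProj_eq_one fun j => by simp, mul_one] at hsweep
  have hfac : T⁻¹ - L = T⁻¹ * (1 - T * L) := by rw [mul_sub, ← mul_assoc, hTT, mul_one, one_mul]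
  have hunit : IsUnit (T⁻¹ - L).det := by
    rw [hfac, det_mul, (IsBlockDiagonal.isStrictBlockLower_mul hTblk hLlow).det_one_sub, mul_one]
    exact isUnit_nonsing_inv_det T hTunit
  have hkey : (T⁻¹ - L) * (List.ofFn G).reverse.prod = T⁻¹ - D + Lᵀ := by
    rw [List.ofFn_eq_map, ← List.map_reverse, hfac, mul_assoc]
    refine (congrArg (T⁻¹ * ·) hsweep).trans ?_
    rw [mul_sub, ← mul_assoc, hTT]
    noncomm_ring
  rw [← hkey, ← mul_assoc, nonsing_inv_mul _ hunit, one_mul]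

theorem stmt8 {n q : ℕ} (blk : Fin n → Fin q)
    (H D L T : Matrix (Fin n) (Fin n) ℝ)
    (hHsymm : H.IsSymm)
    (hdecomp : H = D - L - Lᵀ)
    (hDblk : ∀ j k, blk j ≠ blk k → D j k = 0)
    (hLlow : ∀ j k, ¬ blk k < blk j → L j k = 0)
    (hT : T.PosDef)
    (hTblk : ∀ j k, blk j ≠ blk k → T j k = 0) :
    let P : Fin q → Matrix (Fin n) (Fin n) ℝ := fun i =>
      Matrix.diagonal fun j => if blk j = i then (1 : ℝ) else 0
    let G : Fin q → Matrix (Fin n) (Fin n) ℝ := fun i => 1 - P i * T * H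
    (List.ofFn G).reverse.prod = (T⁻¹ - L)⁻¹ * (T⁻¹ - D + Lᵀ) :=
  stmt8_general blk H D L T hdecomp hDblk hLlow hT hTblk
end

section
/- Let H be symmetric positive definite with decomposition H = D − L − Lᵀ (D block diagonal, L strictly lower block triangular), and let T be symmetric positive definite block diagonal with 2T⁻¹ − D ≻ 0. Then the matrix M = (T⁻¹ − L)⁻¹ (T⁻¹ − D + Lᵀ) has spectral radius ρ(M) < 1. -/
/-!
With `B = T⁻¹ - L` the iteration matrix is `B⁻¹ (B - H)`, and `B + Bᵀ - H = 2T⁻¹ - D ≻ 0`.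
If `(B - H) x = μ B x` with `x ≠ 0` complex, put `c = x*Bx`, `h = x*Hx > 0`, `s = x*(B + Bᵀ - H)x > 0`.
Then `μ c = c - h` and `2 Re c = s + h`, so `|c - h|² = |c|² - h s < |c|²`, i.e. `|μ| < 1`.
-/

open Matrix

/-- The spectral radius of a real matrix: the supremum of the absolute values of its
(complex) eigenvalues. -/
noncomputable def specRad {n : ℕ} (A : Matrix (Fin n) (Fin n) ℝ) : ℝ :=
  sSup ((fun z : ℂ => ‖z‖) '' spectrum ℂ (A.map (algebraMap ℝ ℂ)))

open scoped ComplexOrder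

theorem RCLike.norm_sub_ofReal_lt_norm {𝕜 : Type*} [RCLike 𝕜] {c : 𝕜} {h : ℝ}
    (h0 : 0 < h) (hc : h < 2 * RCLike.re c) : ‖c - h‖ < ‖c‖ := by
  have hsq : ‖c - h‖ ^ 2 < ‖c‖ ^ 2 := by
    simp only [RCLike.norm_sq_eq_def, map_sub, RCLike.ofReal_re, RCLike.ofReal_im, sub_zero]
    nlinarith
  exact lt_of_pow_lt_pow_left₀ 2 (norm_nonneg c) hsq

theorem norm_lt_one_of_mulVec_sub_eq_smul_mulVec {𝕜 n : Type*} [RCLike 𝕜] [Fintype n]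
    {B H : Matrix n n 𝕜} (hH : H.PosDef) (hS : (B + Bᴴ - H).PosDef)
    {μ : 𝕜} {x : n → 𝕜} (hx : x ≠ 0) (hμ : (B - H) *ᵥ x = μ • (B *ᵥ x)) : ‖μ‖ < 1 := by
  set c := star x ⬝ᵥ (B *ᵥ x)
  obtain ⟨h, h0, hh⟩ := RCLike.pos_iff_exists_ofReal.mp (hH.dotProduct_mulVec_pos hx)
  obtain ⟨s, s0, hs⟩ := RCLike.pos_iff_exists_ofReal.mp (hS.dotProduct_mulVec_pos hx)
  have hμc : μ * c = c - h := by
    rw [hh, ← smul_eq_mul, ← dotProduct_smul, ← hμ, sub_mulVec, dotProduct_sub]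
  have hre : 2 * RCLike.re c = s + h := by
    have hstar : star c = star x ⬝ᵥ (Bᴴ *ᵥ x) := by
      rw [star_dotProduct, star_mulVec, conjTranspose_conjTranspose, ← dotProduct_mulVec]
    have : star c + c = s + h := by
      rw [hh, hs, hstar, ← dotProduct_add, ← dotProduct_add, ← add_mulVec, ← add_mulVec,
        sub_add_cancel, add_comm]
    have := congrArg RCLike.re this
    simp only [map_add, RCLike.star_def, RCLike.conj_re, RCLike.ofReal_re] at this
    linarith
  have hc : 0 < ‖c‖ := by
    refine norm_pos_iff.mpr fun hc0 => ?_
    simp only [hc0, map_zero] at hre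
    linarith
  have : ‖μ‖ * ‖c‖ < 1 * ‖c‖ := by
    rw [← norm_mul, hμc, one_mul]
    exact RCLike.norm_sub_ofReal_lt_norm h0 (by linarith)
  exact lt_of_mul_lt_mul_right this hc.le

theorem Matrix.exists_mulVec_eq_smul_of_mem_spectrum {K n : Type*} [Field K] [Fintype n]
    [DecidableEq n] {A : Matrix n n K} {μ : K} (hμ : μ ∈ spectrum K A) :
    ∃ x : n → K, x ≠ 0 ∧ A *ᵥ x = μ • x := by
  rw [← spectrum_toLin', ← Module.End.hasEigenvalue_iff_mem_spectrum] at hμ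
  obtain ⟨x, hx, hx0⟩ := hμ.exists_hasEigenvector
  exact ⟨x, hx0, by simpa using Module.End.mem_eigenspace_iff.mp hx⟩

theorem Matrix.PosDef.map_algebraMap {𝕜 n : Type*} [RCLike 𝕜] [Fintype n]
    {A : Matrix n n ℝ} (hA : A.PosDef) : (A.map (algebraMap ℝ 𝕜)).PosDef := by
  have hherm : (A.map (algebraMap ℝ 𝕜)).IsHermitian :=
    hA.isHermitian.map _ fun r => (RCLike.conj_ofReal r).symm
  refine .of_dotProduct_mulVec_pos hherm fun x hx => ?_
  set u : n → ℝ := fun i => RCLike.re (x i)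
  set v : n → ℝ := fun i => RCLike.im (x i)
  have hre : RCLike.re (star x ⬝ᵥ (A.map (algebraMap ℝ 𝕜) *ᵥ x)) =
      u ⬝ᵥ (A *ᵥ u) + v ⬝ᵥ (A *ᵥ v) := by
    simp only [dotProduct, mulVec, map_apply, Pi.star_apply, map_sum, Finset.mul_sum,
      ← Finset.sum_add_distrib]
    refine Finset.sum_congr rfl fun j _ => Finset.sum_congr rfl fun k _ => ?_
    simp [u, v, RCLike.mul_re, RCLike.mul_im]
  have huv : u ≠ 0 ∨ v ≠ 0 := by
    by_contra! h
    exact hx <| funext fun i =>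
      RCLike.ext (by simpa using congrFun h.1 i) (by simpa using congrFun h.2 i)
  have hu := hA.posSemidef.dotProduct_mulVec_nonneg u
  have hv := hA.posSemidef.dotProduct_mulVec_nonneg v
  simp only [star_trivial] at hu hv
  refine RCLike.pos_iff.mpr ⟨?_, hherm.im_star_dotProduct_mulVec_self x⟩
  rw [hre]
  rcases huv with h | h
  · exact add_pos_of_pos_of_nonneg (by simpa using hA.dotProduct_mulVec_pos h) hv
  · exact add_pos_of_nonneg_of_pos hu (by simpa using hA.dotProduct_mulVec_pos h)

theorem specRad_lt_one {n : ℕ} {A : Matrix (Fin n) (Fin n) ℝ}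
    (h : ∀ μ ∈ spectrum ℂ (A.map (algebraMap ℝ ℂ)), ‖μ‖ < 1) : specRad A < 1 := by
  rcases ((fun z : ℂ => ‖z‖) '' spectrum ℂ (A.map (algebraMap ℝ ℂ))).eq_empty_or_nonempty
    with he | hne
  · rw [specRad, he, Real.sSup_empty]
    exact one_pos
  · rw [specRad, ((finite_spectrum _).image _).csSup_lt_iff hne]
    rintro _ ⟨μ, hμ, rfl⟩
    exact h μ hμ

theorem Matrix.isUnit_det_of_posDef_add_transpose {n : Type*} [Fintype n] [DecidableEq n]
    {B : Matrix n n ℝ} (h : (B + Bᵀ).PosDef) : IsUnit B.det := by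
  rw [isUnit_iff_ne_zero]
  intro hdet
  obtain ⟨v, hv0, hv⟩ := exists_mulVec_eq_zero_iff.mpr hdet
  have hpos := h.dotProduct_mulVec_pos hv0
  rw [star_trivial, add_mulVec, dotProduct_add, mulVec_transpose, dotProduct_comm v (v ᵥ* B),
    ← dotProduct_mulVec, hv, dotProduct_zero, add_zero] at hpos
  exact hpos.ne' rfl

theorem specRad_inv_mul_sub_lt_one {n : ℕ} {B H : Matrix (Fin n) (Fin n) ℝ} (hH : H.PosDef)
    (hS : (B + Bᵀ - H).PosDef) : specRad (B⁻¹ * (B - H)) < 1 := by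
  have hB : IsUnit B.det :=
    isUnit_det_of_posDef_add_transpose (by simpa using hS.add_posSemidef hH.posSemidef)
  refine specRad_lt_one fun μ hμ => ?_
  obtain ⟨x, hx0, hx⟩ := exists_mulVec_eq_smul_of_mem_spectrum hμ
  have hsum : (B + Bᵀ - H).map (algebraMap ℝ ℂ)
      = B.map (algebraMap ℝ ℂ) + (B.map (algebraMap ℝ ℂ))ᴴ - H.map (algebraMap ℝ ℂ) := by
    ext i j
    simp
  refine norm_lt_one_of_mulVec_sub_eq_smul_mulVec hH.map_algebraMap
    (hsum ▸ hS.map_algebraMap) hx0 ?_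
  have hmul : B.map (algebraMap ℝ ℂ) * (B⁻¹ * (B - H)).map (algebraMap ℝ ℂ)
      = (B - H).map (algebraMap ℝ ℂ) := by
    rw [← Matrix.map_mul, ← Matrix.mul_assoc, mul_nonsing_inv _ hB, Matrix.one_mul]
  rw [← Matrix.map_sub _ (map_sub _), ← hmul, ← mulVec_mulVec, hx, mulVec_smul]

theorem stmt9_general {n : ℕ}
    (H D L T : Matrix (Fin n) (Fin n) ℝ)
    (hH : H.PosDef)
    (hdecomp : H = D - L - Lᵀ)
    (hT : T.PosDef)
    (hOR : ((2 : ℝ) • T⁻¹ - D).PosDef) :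
    specRad ((T⁻¹ - L)⁻¹ * (T⁻¹ - D + Lᵀ)) < 1 := by
  have hTinv : (T⁻¹)ᵀ = T⁻¹ := by
    rw [transpose_nonsing_inv]
    exact congrArg _ hT.isHermitian.eq
  have hsub : T⁻¹ - D + Lᵀ = (T⁻¹ - L) - H := by
    rw [hdecomp]
    abel
  have hsym : (T⁻¹ - L) + (T⁻¹ - L)ᵀ - H = (2 : ℝ) • T⁻¹ - D := by
    rw [transpose_sub, hTinv, hdecomp]
    module
  rw [hsub]
  exact specRad_inv_mul_sub_lt_one hH (hsym ▸ hOR)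

theorem stmt9 {n q : ℕ} (blk : Fin n → Fin q)
    (H D L T : Matrix (Fin n) (Fin n) ℝ)
    (hH : H.PosDef)
    (hdecomp : H = D - L - Lᵀ)
    (hDblk : ∀ j k, blk j ≠ blk k → D j k = 0)
    (hLlow : ∀ j k, ¬ blk k < blk j → L j k = 0)
    (hT : T.PosDef)
    (hTblk : ∀ j k, blk j ≠ blk k → T j k = 0)
    (hOR : ((2 : ℝ) • T⁻¹ - D).PosDef) :
    specRad ((T⁻¹ - L)⁻¹ * (T⁻¹ - D + Lᵀ)) < 1 :=
  stmt9_general H D L T hH hdecomp hT hOR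
end
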